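/- For any ideal I in a polynomial ring over a field K and any term order σ, the Hilbert function of R/I equals the Hilbert function of R/in(I), where in(I) is the initial ideal of I with respect to σ. -/

import Mathlib

open MvPolynomial

variable {σ K : Type*} [Field K]

/-- The leading exponent (multidegree) of a polynomial with respect to a monomial order. -/
noncomputable def leadExp (m : MonomialOrder σ) (p : MvPolynomial σ K) : σ →₀ ℕ :=
  m.toSyn.symm (p.support.sup fun e => m.toSyn e)

/-- The initial ideal of `I` with respect to a monomial order: the ideal generated by the
leading monomials of the nonzero elements of `I`. -/
noncomputable def initialIdeal (m : MonomialOrder σ) (I : Ideal (MvPolynomial σ K)) :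
    Ideal (MvPolynomial σ K) :=
  Ideal.span ((fun p => (MvPolynomial.monomial (leadExp m p) (1 : K))) ''
    {p | p ∈ I ∧ p ≠ 0})

/-- An ideal of a polynomial ring is homogeneous (w.r.t. the standard grading). -/
def IsHomogeneousIdeal {n : ℕ} (I : Ideal (MvPolynomial (Fin n) K)) : Prop :=
  ∀ p ∈ I, ∀ d : ℕ, MvPolynomial.homogeneousComponent d p ∈ I

/-- The Hilbert function of `R/I` in degree `d`. -/
noncomputable def quotHilbert {n : ℕ} (I : Ideal (MvPolynomial (Fin n) K)) (d : ℕ) : ℕ :=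
  Module.finrank K
    ((MvPolynomial.homogeneousSubmodule (Fin n) K d).map
      (Ideal.Quotient.mkₐ K I).toLinearMap)

/-! For a subspace `V` of `K[x]`, choosing for every leading exponent of `V` a monic element of `V`
with that leading exponent gives a basis of `V`: it is independent because the leading exponents
are distinct, and it spans because cancelling leading terms (the division algorithm) strictly lowers
the leading exponent in a well-order. So `dim V` is the number of leading exponents of `V`.
If `I` is homogeneous, the leading exponents of `I_d` are those of `I` of total degree `d`; the
initial ideal is a monomial ideal, hence homogeneous, and has the same leading exponents as `I`.
Hence `dim I_d = dim in(I)_d`, and `dim (R/I)_d = dim R_d - dim I_d` agrees for both ideals. -/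

namespace MonomialOrder

variable {R : Type*} [CommRing R] (m : MonomialOrder σ)

theorem degree_sub_leadingCoeff_smul_lt {f g : MvPolynomial σ R} (hfg : m.degree g = m.degree f)
    (hg : m.Monic g) (hne : f - m.leadingCoeff f • g ≠ 0) :
    m.degree (f - m.leadingCoeff f • g) ≺[m] m.degree f := by
  refine lt_of_le_of_ne ?_ fun heq => ?_
  · calc m.toSyn (m.degree (f - m.leadingCoeff f • g))
        ≤ m.toSyn (m.degree f) ⊔ m.toSyn (m.degree (m.leadingCoeff f • g)) := degree_sub_le
      _ ≤ m.toSyn (m.degree f) := sup_le le_rfl (hfg ▸ degree_smul_le)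
  · apply m.coeff_degree_ne_zero_iff.mpr hne
    rw [m.toSyn.injective heq, coeff_sub, coeff_smul, ← hfg, hg.coeff_degree, hfg, smul_eq_mul,
      mul_one, leadingCoeff, sub_self]

theorem linearIndependent_of_injective_degree [NoZeroDivisors R] {ι : Type*}
    {v : ι → MvPolynomial σ R} (hv : ∀ i, v i ≠ 0) (hinj : (m.degree ∘ v).Injective) :
    LinearIndependent R v := by
  classical
  rw [linearIndependent_iff']
  intro s g hsum i hi
  by_contra hgi
  obtain ⟨a, haf, hmax⟩ := (s.filter (g · ≠ 0)).exists_max_image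
    (fun j => m.toSyn (m.degree (v j))) ⟨i, Finset.mem_filter.mpr ⟨hi, hgi⟩⟩
  obtain ⟨has, hga⟩ := Finset.mem_filter.mp haf
  have hothers : ∀ j ∈ s, j ≠ a → g j * (v j).coeff (m.degree (v a)) = 0 := by
    intro j hjs hja
    by_cases hgj : g j = 0
    · rw [hgj, zero_mul]
    · have hlt : m.degree (v j) ≺[m] m.degree (v a) :=
        lt_of_le_of_ne (hmax j (Finset.mem_filter.mpr ⟨hjs, hgj⟩))
          fun h => hja (hinj (m.toSyn.injective h))
      rw [m.coeff_eq_zero_of_lt hlt, mul_zero]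
  have hcoeff := congrArg (coeff (m.degree (v a))) hsum
  simp only [coeff_sum, coeff_smul, smul_eq_mul, coeff_zero] at hcoeff
  rw [Finset.sum_eq_single_of_mem a has hothers] at hcoeff
  exact hga ((mul_eq_zero.mp hcoeff).resolve_right (m.coeff_degree_ne_zero_iff.mpr (hv a)))

end MonomialOrder

open MonomialOrder

section LeadingExponents

variable (m : MonomialOrder σ)

def leadSet (S : Set (MvPolynomial σ K)) : Set (σ →₀ ℕ) :=
  m.degree '' {p | p ∈ S ∧ p ≠ 0}

variable {m}

theorem exists_monic_of_mem_leadSet {V : Submodule K (MvPolynomial σ K)} {a : σ →₀ ℕ}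
    (ha : a ∈ leadSet m (V : Set (MvPolynomial σ K))) :
    ∃ p ∈ V, m.degree p = a ∧ m.Monic p := by
  obtain ⟨q, ⟨hqV, hq0⟩, rfl⟩ := ha
  have hc : m.leadingCoeff q ≠ 0 := m.leadingCoeff_ne_zero_iff.mpr hq0
  have hdeg : m.degree ((m.leadingCoeff q)⁻¹ • q) = m.degree q :=
    m.degree_smul_of_isRegular (inv_ne_zero hc).isUnit.isRegular
  refine ⟨(m.leadingCoeff q)⁻¹ • q, V.smul_mem _ hqV, hdeg, ?_⟩
  rw [Monic, leadingCoeff, hdeg, coeff_smul, smul_eq_mul, ← leadingCoeff, inv_mul_cancel₀ hc]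

variable (m)

noncomputable def monicOfLeadSet (V : Submodule K (MvPolynomial σ K))
    (a : leadSet m (V : Set (MvPolynomial σ K))) : MvPolynomial σ K :=
  (exists_monic_of_mem_leadSet a.2).choose

variable (V : Submodule K (MvPolynomial σ K))

theorem monicOfLeadSet_mem (a : leadSet m (V : Set (MvPolynomial σ K))) :
    monicOfLeadSet m V a ∈ V :=
  (exists_monic_of_mem_leadSet a.2).choose_spec.1

theorem degree_monicOfLeadSet (a : leadSet m (V : Set (MvPolynomial σ K))) :
    m.degree (monicOfLeadSet m V a) = a :=
  (exists_monic_of_mem_leadSet a.2).choose_spec.2.1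

theorem monic_monicOfLeadSet (a : leadSet m (V : Set (MvPolynomial σ K))) :
    m.Monic (monicOfLeadSet m V a) :=
  (exists_monic_of_mem_leadSet a.2).choose_spec.2.2

theorem linearIndependent_monicOfLeadSet : LinearIndependent K (monicOfLeadSet m V) :=
  m.linearIndependent_of_injective_degree (fun a => (monic_monicOfLeadSet m V a).ne_zero)
    fun a b h => Subtype.ext <| by
      simpa only [Function.comp_apply, degree_monicOfLeadSet] using h

theorem span_monicOfLeadSet : Submodule.span K (Set.range (monicOfLeadSet m V)) = V := by
  refine le_antisymm (Submodule.span_le.mpr (Set.range_subset_iff.mpr (monicOfLeadSet_mem m V)))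
    fun q hq => ?_
  suffices h : ∀ s : m.syn, ∀ q ∈ V, m.toSyn (m.degree q) = s →
      q ∈ Submodule.span K (Set.range (monicOfLeadSet m V)) from h _ q hq rfl
  intro s
  induction s using WellFoundedLT.induction with
  | ind s IH =>
    rintro q hq rfl
    by_cases hq0 : q = 0
    · rw [hq0]; exact Submodule.zero_mem _
    set a : leadSet m (V : Set (MvPolynomial σ K)) := ⟨m.degree q, q, ⟨hq, hq0⟩, rfl⟩
    rw [← sub_add_cancel q (m.leadingCoeff q • monicOfLeadSet m V a)]
    set r := q - m.leadingCoeff q • monicOfLeadSet m V a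
    refine Submodule.add_mem _ ?_ (Submodule.smul_mem _ _ (Submodule.subset_span ⟨a, rfl⟩))
    by_cases hr0 : r = 0
    · rw [hr0]; exact Submodule.zero_mem _
    exact IH _ (m.degree_sub_leadingCoeff_smul_lt (degree_monicOfLeadSet m V a)
        (monic_monicOfLeadSet m V a) hr0) r
      (V.sub_mem hq (V.smul_mem _ (monicOfLeadSet_mem m V a))) rfl

noncomputable def leadBasis : Module.Basis (leadSet m (V : Set (MvPolynomial σ K))) K V :=
  (Module.Basis.span (linearIndependent_monicOfLeadSet m V)).map
    (LinearEquiv.ofEq _ _ (span_monicOfLeadSet m V))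

theorem finrank_eq_card_leadSet :
    Module.finrank K V = Nat.card (leadSet m (V : Set (MvPolynomial σ K))) :=
  Module.finrank_eq_nat_card_basis (leadBasis m V)

end LeadingExponents

section InitialIdeal

variable {m : MonomialOrder σ} {I : Ideal (MvPolynomial σ K)}

theorem add_mem_leadSet {a : σ →₀ ℕ} (ha : a ∈ leadSet m (I : Set (MvPolynomial σ K)))
    (b : σ →₀ ℕ) : b + a ∈ leadSet m (I : Set (MvPolynomial σ K)) := by
  classical
  obtain ⟨p, ⟨hpI, hp0⟩, rfl⟩ := ha
  have hb0 : monomial b (1 : K) ≠ 0 := by simp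
  refine ⟨monomial b 1 * p, ⟨I.mul_mem_left _ hpI, mul_ne_zero hb0 hp0⟩, ?_⟩
  rw [m.degree_mul hb0 hp0, m.degree_monomial, if_neg one_ne_zero]

theorem initialIdeal_eq_span_leadSet :
    initialIdeal m I =
      Ideal.span ((fun a => monomial a (1 : K)) '' leadSet m (I : Set (MvPolynomial σ K))) := by
  rw [initialIdeal, leadSet, Set.image_image]
  -- `leadExp m` unfolds to `m.degree`
  rfl

theorem leadSet_initialIdeal :
    leadSet m (initialIdeal m I : Set (MvPolynomial σ K)) =
      leadSet m (I : Set (MvPolynomial σ K)) := by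
  classical
  ext a
  constructor
  · rintro ⟨q, ⟨hq, hq0⟩, rfl⟩
    rw [SetLike.mem_coe, initialIdeal_eq_span_leadSet, mem_ideal_span_monomial_image] at hq
    obtain ⟨b, hb, hbq⟩ := hq _ (m.degree_mem_support hq0)
    rw [← tsub_add_cancel_of_le hbq]
    exact add_mem_leadSet hb _
  · intro ha
    refine ⟨monomial a 1, ⟨?_, by simp⟩, by rw [m.degree_monomial, if_neg one_ne_zero]⟩
    rw [SetLike.mem_coe, initialIdeal_eq_span_leadSet]
    exact Ideal.subset_span ⟨a, ha, rfl⟩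

end InitialIdeal

section HomogeneousComponent

variable (m : MonomialOrder σ) {p : MvPolynomial σ K}

theorem degree_mem_support_homogeneousComponent (hp : p ≠ 0) :
    m.degree p ∈ (homogeneousComponent (m.degree p).degree p).support := by
  rw [support_homogeneousComponent, Finset.mem_filter]
  exact ⟨m.degree_mem_support hp, rfl⟩

theorem degree_homogeneousComponent_degree (hp : p ≠ 0) :
    m.degree (homogeneousComponent (m.degree p).degree p) = m.degree p := by
  refine m.toSyn.injective <|
    le_antisymm ?_ (m.le_degree (degree_mem_support_homogeneousComponent m hp))
  refine m.degree_le_degree_of_support_subset ?_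
  rw [support_homogeneousComponent]
  exact Finset.filter_subset _ _

end HomogeneousComponent

section HomogeneousIdeal

variable {n : ℕ} (m : MonomialOrder (Fin n))

theorem isHomogeneousIdeal_span_monomial (S : Set (Fin n →₀ ℕ)) :
    IsHomogeneousIdeal (Ideal.span ((fun a => monomial a (1 : K)) '' S)) := by
  intro p hp d
  rw [mem_ideal_span_monomial_image] at hp ⊢
  intro a ha
  rw [support_homogeneousComponent, Finset.mem_filter] at ha
  exact hp a ha.1

theorem isHomogeneousIdeal_initialIdeal (I : Ideal (MvPolynomial (Fin n) K)) :
    IsHomogeneousIdeal (initialIdeal m I) := by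
  rw [initialIdeal_eq_span_leadSet]
  exact isHomogeneousIdeal_span_monomial _

theorem leadSet_inter_homogeneousSubmodule {J : Ideal (MvPolynomial (Fin n) K)}
    (hJ : IsHomogeneousIdeal J) (d : ℕ) :
    leadSet m ((J : Set (MvPolynomial (Fin n) K)) ∩ homogeneousSubmodule (Fin n) K d) =
      {a ∈ leadSet m (J : Set (MvPolynomial (Fin n) K)) | a.degree = d} := by
  ext a
  constructor
  · rintro ⟨p, ⟨⟨hpJ, hpd⟩, hp0⟩, rfl⟩
    refine ⟨⟨p, ⟨hpJ, hp0⟩, rfl⟩, ?_⟩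
    by_contra h
    exact m.coeff_degree_ne_zero_iff.mpr hp0
      (((mem_homogeneousSubmodule _ _).mp hpd).coeff_eq_zero h)
  · rintro ⟨⟨p, ⟨hpJ, hp0⟩, rfl⟩, rfl⟩
    have hmem := degree_mem_support_homogeneousComponent m hp0
    refine ⟨homogeneousComponent _ p, ⟨⟨hJ p hpJ _, homogeneousComponent_mem _ p⟩, ?_⟩,
      degree_homogeneousComponent_degree m hp0⟩
    exact ne_zero_iff.mpr ⟨_, mem_support_iff.mp hmem⟩

theorem finrank_initialIdeal_inf_homogeneousSubmodule {I : Ideal (MvPolynomial (Fin n) K)}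
    (hI : IsHomogeneousIdeal I) (d : ℕ) :
    Module.finrank K
        ↥((initialIdeal m I).restrictScalars K ⊓ homogeneousSubmodule (Fin n) K d) =
      Module.finrank K ↥(I.restrictScalars K ⊓ homogeneousSubmodule (Fin n) K d) := by
  rw [finrank_eq_card_leadSet m, finrank_eq_card_leadSet m]
  simp only [Submodule.coe_inf, Submodule.coe_restrictScalars]
  rw [leadSet_inter_homogeneousSubmodule m (isHomogeneousIdeal_initialIdeal m I),
    leadSet_inter_homogeneousSubmodule m hI, leadSet_initialIdeal]

end HomogeneousIdeal

section HilbertFunction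

open Module

theorem finrank_map_add_finrank_ker_inf {M N : Type*} [AddCommGroup M] [Module K M]
    [AddCommGroup N] [Module K N] (f : M →ₗ[K] N) (L : Submodule K M) [FiniteDimensional K L] :
    finrank K (L.map f) + finrank K ↥(LinearMap.ker f ⊓ L) = finrank K L := by
  rw [← LinearMap.range_domRestrict, ← (f.domRestrict L).finrank_range_add_finrank_ker,
    LinearMap.ker_domRestrict, ← (Submodule.comapSubtypeEquivOfLe inf_le_right).finrank_eq,
    Submodule.comap_inf, Submodule.comap_subtype_self, inf_top_eq]

theorem quotHilbert_add_finrank_inf {n : ℕ} (J : Ideal (MvPolynomial (Fin n) K)) (d : ℕ) :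
    quotHilbert J d + finrank K ↥(J.restrictScalars K ⊓ homogeneousSubmodule (Fin n) K d) =
      finrank K (homogeneousSubmodule (Fin n) K d) := by
  have : FiniteDimensional K (homogeneousSubmodule (Fin n) K d) :=
    Module.Finite.iff_fg.mpr (homogeneousSubmodule_fg (Fin n) K d)
  have hker : LinearMap.ker (Ideal.Quotient.mkₐ K J).toLinearMap = J.restrictScalars K := by
    ext p
    simp [Ideal.Quotient.eq_zero_iff_mem]
  rw [quotHilbert, ← hker]
  exact finrank_map_add_finrank_ker_inf _ _

end HilbertFunction

/-- For a homogeneous ideal `I` of `R = K[x_0,…,x_n]` and any term order,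
the Hilbert function of `R/I` equals that of `R/in(I)`. -/
theorem hilbert_initialIdeal {n : ℕ} (m : MonomialOrder (Fin n))
    (I : Ideal (MvPolynomial (Fin n) K)) (hI : IsHomogeneousIdeal I) :
    ∀ d : ℕ, quotHilbert I d = quotHilbert (initialIdeal m I) d := by
  intro d
  have hI_d := quotHilbert_add_finrank_inf I d
  have hinI_d := quotHilbert_add_finrank_inf (initialIdeal m I) d
  rw [finrank_initialIdeal_inf_homogeneousSubmodule m hI] at hinI_d
  omega
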